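/- Let (S_L, S_R) be a partizan subtraction game whose outcome sequence is eventually L, with outcome L for all n > p. Let x ∈ S_L and d > p + max(S_R). If, in the game G_d = (S_L, S_R ∪ {d}), Left moving second wins on heap n (¬RightFirstWins_{G_d}(n)), then Left moving second also wins on heap n + d + x in G_d; and if Left moving first wins on n in G_d, then Left moving first wins on n + d + x in G_d. -/
import Mathlib


mutual
def LeftFirstWins (SL SR : Finset ℕ) : ℕ → Prop
  | n => ∃ s ∈ SL, ∃ (_ : 0 < s) (_ : s ≤ n), ¬ RightFirstWins SL SR (n - s)
  termination_by n => n
  decreasing_by omega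
def RightFirstWins (SL SR : Finset ℕ) : ℕ → Prop
  | n => ∃ s ∈ SR, ∃ (_ : 0 < s) (_ : s ≤ n), ¬ LeftFirstWins SL SR (n - s)
  termination_by n => n
  decreasing_by omega
end

inductive Outcome | P | L | R | N
deriving DecidableEq

open Classical in
noncomputable def outcome (SL SR : Finset ℕ) (n : ℕ) : Outcome :=
  if LeftFirstWins SL SR n then
    if RightFirstWins SL SR n then .N else .L
  else
    if RightFirstWins SL SR n then .R else .P

lemma LFW_iff (SL SR : Finset ℕ) (n : ℕ) :
    LeftFirstWins SL SR n ↔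
      ∃ s ∈ SL, 0 < s ∧ s ≤ n ∧ ¬ RightFirstWins SL SR (n - s) := by
  rw [LeftFirstWins]
  constructor
  · rintro ⟨s, hs, h1, h2, h3⟩; exact ⟨s, hs, h1, h2, h3⟩
  · rintro ⟨s, hs, h1, h2, h3⟩; exact ⟨s, hs, h1, h2, h3⟩

lemma RFW_iff (SL SR : Finset ℕ) (n : ℕ) :
    RightFirstWins SL SR n ↔
      ∃ s ∈ SR, 0 < s ∧ s ≤ n ∧ ¬ LeftFirstWins SL SR (n - s) := by
  rw [RightFirstWins]
  constructor
  · rintro ⟨s, hs, h1, h2, h3⟩; exact ⟨s, hs, h1, h2, h3⟩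
  · rintro ⟨s, hs, h1, h2, h3⟩; exact ⟨s, hs, h1, h2, h3⟩

lemma outcome_L (SL SR : Finset ℕ) (n : ℕ) (h : outcome SL SR n = .L) :
    LeftFirstWins SL SR n ∧ ¬ RightFirstWins SL SR n := by
  unfold outcome at h
  split_ifs at h with h1 h2
  all_goals first | exact ⟨h1, h2⟩ | simp_all

/-- Below `d`, the games with and without the extra move `d` coincide. -/
lemma coincide (SL SR : Finset ℕ) (d : ℕ) :
    ∀ m, m < d →
      (LeftFirstWins SL (insert d SR) m ↔ LeftFirstWins SL SR m) ∧
      (RightFirstWins SL (insert d SR) m ↔ RightFirstWins SL SR m) := by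
  intro m
  induction m using Nat.strong_induction_on with
  | _ m ih =>
    intro hm
    constructor
    · rw [LFW_iff, LFW_iff]
      constructor
      · rintro ⟨s, hs, h1, h2, h3⟩
        refine ⟨s, hs, h1, h2, fun hr => h3 ?_⟩
        exact ((ih (m - s) (by omega) (by omega)).2).mpr hr
      · rintro ⟨s, hs, h1, h2, h3⟩
        refine ⟨s, hs, h1, h2, fun hr => h3 ?_⟩
        exact ((ih (m - s) (by omega) (by omega)).2).mp hr
    · rw [RFW_iff, RFW_iff]
      constructor
      · rintro ⟨s, hs, h1, h2, h3⟩
        rcases Finset.mem_insert.mp hs with rfl | hs'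
        · omega
        refine ⟨s, hs', h1, h2, fun hl => h3 ?_⟩
        exact ((ih (m - s) (by omega) (by omega)).1).mpr hl
      · rintro ⟨s, hs, h1, h2, h3⟩
        refine ⟨s, Finset.mem_insert_of_mem hs, h1, h2, fun hl => h3 ?_⟩
        exact ((ih (m - s) (by omega) (by omega)).1).mp hl

theorem stmt_19 (SL SR : Finset ℕ) (hSL : ∀ s ∈ SL, 0 < s) (hSR : ∀ s ∈ SR, 0 < s)
    (p : ℕ) (hL : ∀ n > p, outcome SL SR n = .L)
    (x : ℕ) (hx : x ∈ SL) (d : ℕ) (hd : ∀ s ∈ SR, p + s < d) (n : ℕ) :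
    (¬ RightFirstWins SL (insert d SR) n →
      ¬ RightFirstWins SL (insert d SR) (n + d + x)) ∧
    (LeftFirstWins SL (insert d SR) n →
      LeftFirstWins SL (insert d SR) (n + d + x)) := by
  have hx0 : 0 < x := hSL x hx
  -- for p < m < d, right first loses in the new game
  have hmid : ∀ m, p < m → m < d → ¬ RightFirstWins SL (insert d SR) m := by
    intro m h1 h2
    have := (coincide SL SR d m h2).2
    rw [this]
    exact (outcome_L SL SR m (hL m h1)).2
  induction n using Nat.strong_induction_on with
  | _ n ih =>
    have partB : ∀ m < n, LeftFirstWins SL (insert d SR) m →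
        LeftFirstWins SL (insert d SR) (m + d + x) := fun m hm => (ih m hm).2
    have partA : ∀ m < n, ¬ RightFirstWins SL (insert d SR) m →
        ¬ RightFirstWins SL (insert d SR) (m + d + x) := fun m hm => (ih m hm).1
    constructor
    · -- part (a)
      intro hnR hbig
      rw [RFW_iff] at hbig
      obtain ⟨s, hs, h1, h2, h3⟩ := hbig
      rcases Finset.mem_insert.mp hs with rfl | hs'
      · -- Right plays d, reaching n + x; Left replies x reaching n
        apply h3
        rw [LFW_iff]
        refine ⟨x, hx, hx0, by omega, ?_⟩
        have : n + s + x - s - x = n := by omega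
        rw [this]
        exact hnR
      · have hsd : p + s < d := hd s hs'
        by_cases hsn : s ≤ n
        · -- Right plays s ≤ n: from ¬R'(n) we get L'(n-s), then IH part (b)
          have hLns : LeftFirstWins SL (insert d SR) (n - s) := by
            by_contra hc
            apply hnR
            rw [RFW_iff]
            exact ⟨s, Finset.mem_insert_of_mem hs', h1, hsn, hc⟩
          have := partB (n - s) (by omega) hLns
          have heq : n - s + d + x = n + d + x - s := by omega
          rw [heq] at this
          exact h3 this
        · -- Right plays s > n: heap = (n+d-s) + x with p < n+d-s < d
          apply h3
          rw [LFW_iff]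
          refine ⟨x, hx, hx0, by omega, ?_⟩
          have heq : n + d + x - s - x = n + d - s := by omega
          rw [heq]
          exact hmid (n + d - s) (by omega) (by omega)
    · -- part (b)
      intro hnL
      rw [LFW_iff] at hnL
      obtain ⟨t, ht, h1, h2, h3⟩ := hnL
      have := partA (n - t) (by omega) h3
      rw [LFW_iff]
      refine ⟨t, ht, h1, by omega, ?_⟩
      have heq : n + d + x - t = n - t + d + x := by omega
      rw [heq]
      exact this
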